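/- Let V be an n-dimensional left vector space over a division ring R, V' an n'-dimensional left vector space over a division ring R', 1 ≤ k ≤ n−1, 1 ≤ k' ≤ n'−1, and let f : G_k(V) → G_{k'}(V') be a mapping whose restriction to every apartment of G_k(V) preserves graph distances, i.e. for every apartment A and all P, Q ∈ A the distance between f(P) and f(Q) in Γ_{k'}(V') equals the distance between P and Q in Γ_k(V). Then f is an isometric embedding of Γ_k(V) in Γ_{k'}(V'). -/

import Mathlib

open Submodule Set Function Module

/-- The Grassmannian of `k`-dimensional subspaces of `V`. -/
def Grass (R V : Type*) [DivisionRing R] [AddCommGroup V] [Module R V] (k : ℕ) : Type _ :=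
  {P : Submodule R V // Module.finrank R ↥P = k}

/-- The Grassmann graph `Γ_k(V)`: two `k`-dimensional subspaces are adjacent iff their
intersection is `(k-1)`-dimensional. -/
def grassGraph (R V : Type*) [DivisionRing R] [AddCommGroup V] [Module R V] (k : ℕ) :
    SimpleGraph (Grass R V k) where
  Adj P Q := P ≠ Q ∧ Module.finrank R ↥(P.1 ⊓ Q.1) = k - 1
  symm := by
    constructor
    intro P Q h
    exact ⟨h.1.symm, by rw [inf_comm]; exact h.2⟩
  loopless := by
    constructor
    intro P h
    exact h.1 rfl

/-- Vertices of the Johnson graph: `k`-element subsets of `{1, …, n}`. -/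
abbrev JVertex (n k : ℕ) := {A : Finset (Fin n) // A.card = k}

/-- The Johnson graph `J(n,k)`: two `k`-element subsets are adjacent iff their
intersection has `k-1` elements. -/
def johnsonGraph (n k : ℕ) : SimpleGraph (JVertex n k) where
  Adj A B := A ≠ B ∧ (A.1 ∩ B.1).card = k - 1
  symm := by
    constructor
    intro A B h
    exact ⟨h.1.symm, by rw [Finset.inter_comm]; exact h.2⟩
  loopless := by
    constructor
    intro A h
    exact h.1 rfl

/-- A family of vectors is `m`-independent if every `m`-element subfamily is
linearly independent. -/
def MIndep (R : Type*) {W : Type*} [DivisionRing R] [AddCommGroup W] [Module R W]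
    {n : ℕ} (m : ℕ) (x : Fin n → W) : Prop :=
  ∀ A : Finset (Fin n), A.card = m → LinearIndependent R (fun i : A => x (i : Fin n))

/-- `J_k(X)`: the set of all `k`-dimensional subspaces spanned by `k`-element subsets of
the family `x`. -/
def JkSet (R : Type*) {W : Type*} [DivisionRing R] [AddCommGroup W] [Module R W]
    {n : ℕ} (k : ℕ) (x : Fin n → W) : Set (Submodule R W) :=
  {P | ∃ A : Finset (Fin n), A.card = k ∧ P = Submodule.span R (x '' ↑A)}

/-- Apartments of `G_k(V)`: the sets of `k`-dimensional subspaces spanned by subsets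
of a base of the `n`-dimensional space `V`. -/
def IsApartment (R V : Type*) [DivisionRing R] [AddCommGroup V] [Module R V]
    (n k : ℕ) (𝒜 : Set (Grass R V k)) : Prop :=
  ∃ b : Basis (Fin n) R V, 𝒜 = {P : Grass R V k | P.1 ∈ JkSet R k ⇑b}

/-- A `J(n,k)`-subset of `G_{k'}(V')`: the image of an isometric embedding of the Johnson
graph `J(n,k)` in the Grassmann graph `Γ_{k'}(V')`. -/
def IsJSubset (R' V' : Type*) [DivisionRing R'] [AddCommGroup V'] [Module R' V']
    (n k k' : ℕ) (J : Set (Grass R' V' k')) : Prop :=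
  ∃ g : JVertex n k → Grass R' V' k',
    Function.Injective g ∧
    (∀ A B : JVertex n k,
      (grassGraph R' V' k').dist (g A) (g B) = (johnsonGraph n k).dist A B) ∧
    Set.range g = J

/-- A `J`-mapping: a mapping transferring every apartment of `G_k(V)` to a
`J(n,k)`-subset of `G_{k'}(V')`. -/
def IsJMapping (R V R' V' : Type*) [DivisionRing R] [AddCommGroup V] [Module R V]
    [DivisionRing R'] [AddCommGroup V'] [Module R' V'] (n k k' : ℕ)
    (f : Grass R V k → Grass R' V' k') : Prop :=
  ∀ 𝒜 : Set (Grass R V k), IsApartment R V n k 𝒜 → IsJSubset R' V' n k k' (f '' 𝒜)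

/-!
Any two `k`-subspaces `P`, `Q` lie in a common apartment: a basis of `P ⊓ Q`, extended to bases of
`P` and of `Q`, gives an independent set that extends to a basis of `V`. Hence `f` preserves every
distance. For injectivity, distance `0` must force equality, i.e. the Grassmann graph must be
connected; this holds because every apartment is the image of the connected Johnson graph `J(n,k)`
under a graph homomorphism.
-/

open SimpleGraph

section Apartment

variable {R V : Type*} [DivisionRing R] [AddCommGroup V] [Module R V]

/-- Bases of `P ⊓ Q`, extended to bases of `P` and of `Q`, together form an independent set. -/
lemma exists_linearIndepOn_union_span_eq (P Q : Submodule R V) :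
    ∃ sP sQ : Set V, LinearIndepOn R id (sP ∪ sQ) ∧ span R sP = P ∧ span R sQ = Q := by
  obtain ⟨s, hs_le, hs_span, hs⟩ :=
    exists_linearIndependent R ((P ⊓ Q : Submodule R V) : Set V)
  rw [span_eq] at hs_span
  obtain ⟨sP, hsP_le, hs_sP, hP_le, hsP⟩ :=
    exists_linearIndepOn_id_extension hs fun x hx => (hs_le hx).1
  obtain ⟨sQ, hsQ_le, hs_sQ, hQ_le, hsQ⟩ :=
    exists_linearIndepOn_id_extension hs fun x hx => (hs_le hx).2
  have hsP_span : span R sP = P := (span_le.2 hsP_le).antisymm hP_le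
  have hsQ_span : span R sQ = Q := (span_le.2 hsQ_le).antisymm hQ_le
  have hdisj_s : Disjoint (P ⊓ Q) (span R (sQ \ s)) := by
    rw [← hs_span]
    refine ((linearIndepOn_id_union_iff disjoint_sdiff_right).1 ?_).2.2
    rwa [union_sdiff_cancel hs_sQ]
  have hdisj : Disjoint (span R sP) (span R (sQ \ s)) := by
    rw [hsP_span, Submodule.disjoint_def]
    intro x hxP hx
    have hxQ : x ∈ Q := hsQ_span ▸ span_mono sdiff_subset hx
    exact Submodule.disjoint_def.1 hdisj_s x ⟨hxP, hxQ⟩ hx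
  refine ⟨sP, sQ, (hsP.id_union (hsQ.mono sdiff_subset) hdisj).mono ?_, hsP_span, hsQ_span⟩
  intro x hx
  by_cases x ∈ s <;> grind

lemma exists_basis_span_image_eq [FiniteDimensional R V] {n : ℕ} (hV : finrank R V = n)
    (P Q : Submodule R V) :
    ∃ (b : Basis (Fin n) R V) (A B : Set (Fin n)),
      span R (b '' A) = P ∧ span R (b '' B) = Q := by
  obtain ⟨sP, sQ, hind, rfl, rfl⟩ := exists_linearIndepOn_union_span_eq P Q
  let b₀ := Basis.extend hind
  let b := b₀.reindex (b₀.indexEquiv (finBasisOfFinrankEq R V hV))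
  have hrange : sP ∪ sQ ⊆ range b := by
    rw [Basis.range_reindex, Basis.range_extend]
    exact hind.subset_extend _
  refine ⟨b, b ⁻¹' sP, b ⁻¹' sQ, ?_, ?_⟩
  · rw [image_preimage_eq_of_subset (subset_union_left.trans hrange)]
  · rw [image_preimage_eq_of_subset (subset_union_right.trans hrange)]

lemma Module.Basis.finrank_span_image {ι : Type*} (b : Basis ι R V) (A : Finset ι) :
    finrank R (span R (b '' A)) = A.card := by
  rw [image_eq_range]
  exact (finrank_span_eq_card (b.linearIndependent.comp _ Subtype.val_injective)).trans
    (Fintype.card_coe A)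

lemma Module.Basis.span_image_injective {ι : Type*} (b : Basis ι R V) :
    Function.Injective fun A : Set ι => span R (b '' A) := by
  intro A B h
  ext i
  simp only [← b.self_mem_span_image]
  exact SetLike.ext_iff.1 h (b i)

lemma Module.Basis.span_image_inf_span_image {ι : Type*} (b : Basis ι R V) (A B : Set ι) :
    span R (b '' A) ⊓ span R (b '' B) = span R (b '' (A ∩ B)) := by
  ext x
  simp only [Submodule.mem_inf, Basis.mem_span_image, subset_inter_iff]

def apartmentHom {n k : ℕ} (b : Basis (Fin n) R V) : johnsonGraph n k →g grassGraph R V k where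
  toFun A := ⟨span R (b '' A.1), by rw [b.finrank_span_image, A.2]⟩
  map_rel' {A B} h := by
    refine ⟨fun hAB => h.1 (Subtype.ext (Finset.coe_injective
      (b.span_image_injective (congrArg Subtype.val hAB)))), ?_⟩
    change finrank R ↥(span R (b '' A.1) ⊓ span R (b '' B.1)) = k - 1
    rw [b.span_image_inf_span_image, ← Finset.coe_inter, b.finrank_span_image, h.2]

lemma exists_apartmentHom_eq [FiniteDimensional R V] {n k : ℕ} (hV : finrank R V = n)
    (P Q : Grass R V k) :
    ∃ (b : Basis (Fin n) R V) (A B : JVertex n k),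
      apartmentHom b A = P ∧ apartmentHom b B = Q := by
  obtain ⟨b, A, B, hA, hB⟩ := exists_basis_span_image_eq hV P.1 Q.1
  have vertex (S : Grass R V k) (X : Set (Fin n)) (hX : span R (b '' X) = S.1) :
      ∃ Y : JVertex n k, apartmentHom b Y = S := by
    have hXY : (X.toFinite.toFinset : Set (Fin n)) = X := X.toFinite.coe_toFinset
    refine ⟨⟨X.toFinite.toFinset, ?_⟩, Subtype.ext ?_⟩
    · rw [← b.finrank_span_image, hXY, hX, S.2]
    · change span R (b '' X.toFinite.toFinset) = S.1
      rw [hXY, hX]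
  obtain ⟨A', rfl⟩ := vertex P A hA
  obtain ⟨B', rfl⟩ := vertex Q B hB
  exact ⟨b, A', B', rfl, rfl⟩

end Apartment

lemma johnsonGraph_exists_adj_card_sdiff_lt {n k : ℕ} {A B : JVertex n k} (hAB : A ≠ B) :
    ∃ A', (johnsonGraph n k).Adj A A' ∧ (A'.1 \ B.1).card < (A.1 \ B.1).card := by
  have hcard : A.1.card = B.1.card := A.2.trans B.2.symm
  obtain ⟨a, haA, haB⟩ := Finset.not_subset.1 fun h =>
    hAB (Subtype.ext (Finset.eq_of_subset_of_card_le h hcard.ge))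
  obtain ⟨c, hcB, hcA⟩ := Finset.not_subset.1 fun h =>
    hAB (Subtype.ext (Finset.eq_of_subset_of_card_le h hcard.le).symm)
  have hcA' : c ∉ A.1.erase a := fun h => hcA (Finset.mem_of_mem_erase h)
  have hk : 1 ≤ k := A.2 ▸ Finset.card_pos.2 ⟨a, haA⟩
  refine ⟨⟨insert c (A.1.erase a), ?_⟩, ⟨?_, ?_⟩, ?_⟩
  · rw [Finset.card_insert_of_notMem hcA', Finset.card_erase_of_mem haA, A.2]
    omega
  · intro h
    exact hcA (congrArg Subtype.val h ▸ Finset.mem_insert_self c _)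
  · rw [Finset.inter_insert_of_notMem hcA, Finset.inter_eq_right.2 (Finset.erase_subset a _),
      Finset.card_erase_of_mem haA, A.2]
  · rw [Finset.insert_sdiff_of_mem _ hcB, Finset.erase_sdiff_comm]
    exact Finset.card_erase_lt_of_mem (Finset.mem_sdiff.2 ⟨haA, haB⟩)

theorem johnsonGraph_reachable {n k : ℕ} (A B : JVertex n k) :
    (johnsonGraph n k).Reachable A B := by
  by_cases hAB : A = B
  · exact hAB ▸ Reachable.refl A
  obtain ⟨A', hadj, hlt⟩ := johnsonGraph_exists_adj_card_sdiff_lt hAB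
  exact hadj.reachable.trans (johnsonGraph_reachable A' B)
termination_by (A.1 \ B.1).card
decreasing_by exact hlt

theorem isometric_on_apartments_isometric_embedding_general
    {R V R' V' : Type*} [DivisionRing R] [AddCommGroup V] [Module R V]
    [DivisionRing R'] [AddCommGroup V'] [Module R' V']
    [FiniteDimensional R V] (n k k' : ℕ)
    (hV : Module.finrank R V = n)
    (f : Grass R V k → Grass R' V' k')
    (hf : ∀ 𝒜 : Set (Grass R V k), IsApartment R V n k 𝒜 →
      ∀ P ∈ 𝒜, ∀ Q ∈ 𝒜,
        (grassGraph R' V' k').dist (f P) (f Q) = (grassGraph R V k).dist P Q) :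
    Function.Injective f ∧
      ∀ P Q : Grass R V k,
        (grassGraph R' V' k').dist (f P) (f Q) = (grassGraph R V k).dist P Q := by
  have hdist (P Q : Grass R V k) :
      (grassGraph R' V' k').dist (f P) (f Q) = (grassGraph R V k).dist P Q := by
    obtain ⟨b, A, B, rfl, rfl⟩ := exists_apartmentHom_eq hV P Q
    exact hf _ ⟨b, rfl⟩ _ ⟨A.1, A.2, rfl⟩ _ ⟨B.1, B.2, rfl⟩
  refine ⟨fun P Q hPQ => ?_, hdist⟩
  obtain ⟨b, A, B, rfl, rfl⟩ := exists_apartmentHom_eq hV P Q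
  by_contra hne
  have hpos := ((johnsonGraph_reachable A B).map (apartmentHom b)).pos_dist_of_ne hne
  rw [← hdist, hPQ, dist_self] at hpos
  exact hpos.false

/-- If the restriction of `f : G_k(V) → G_{k'}(V')` to every apartment of
`G_k(V)` preserves graph distances, then `f` is an isometric embedding of `Γ_k(V)` in
`Γ_{k'}(V')`. -/
theorem isometric_on_apartments_isometric_embedding
    {R V R' V' : Type*} [DivisionRing R] [AddCommGroup V] [Module R V]
    [DivisionRing R'] [AddCommGroup V'] [Module R' V']
    [FiniteDimensional R V] [FiniteDimensional R' V'] (n n' k k' : ℕ)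
    (hV : Module.finrank R V = n) (hV' : Module.finrank R' V' = n')
    (hk1 : 1 ≤ k) (hkn : k ≤ n - 1) (hk'1 : 1 ≤ k') (hk'n : k' ≤ n' - 1)
    (f : Grass R V k → Grass R' V' k')
    (hf : ∀ 𝒜 : Set (Grass R V k), IsApartment R V n k 𝒜 →
      ∀ P ∈ 𝒜, ∀ Q ∈ 𝒜,
        (grassGraph R' V' k').dist (f P) (f Q) = (grassGraph R V k).dist P Q) :
    Function.Injective f ∧
      ∀ P Q : Grass R V k,
        (grassGraph R' V' k').dist (f P) (f Q) = (grassGraph R V k).dist P Q :=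
  isometric_on_apartments_isometric_embedding_general n k k' hV f hf
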